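/- Let X be a pre-Riesz space and let P and Q be band projections on X. Then the following assertions are equivalent: (i) PX ⊆ QX; (ii) QP = P; (iii) P ≤ Q (i.e. Q − P is a positive operator). -/

import Mathlib

open Pointwise

variable {X : Type*} [AddCommGroup X] [PartialOrder X] [IsOrderedAddMonoid X] [Module ℝ X]
    [PosSMulStrictMono ℝ X]

/-- Two elements of an ordered vector space are disjoint if the sets `{x+y, -x-y}` and
`{x-y, y-x}` have the same set of upper bounds. -/
def UDisjoint (x y : X) : Prop :=
  upperBounds ({x + y, -x - y} : Set X) = upperBounds ({x - y, y - x} : Set X)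

/-- The disjoint complement `S^⊥` of a set `S`. -/
def dComp (S : Set X) : Set X := {x : X | ∀ s ∈ S, UDisjoint x s}

/-- A band: a set equal to its double disjoint complement. -/
def IsBand (B : Set X) : Prop := B = dComp (dComp B)

/-- A projection band: a band `B` with `B ∩ B^⊥ = {0}` and `B + B^⊥ = X`. -/
def IsProjBand (B : Set X) : Prop :=
  IsBand B ∧ B ∩ dComp B = {0} ∧ ∀ x : X, ∃ b ∈ B, ∃ c ∈ dComp B, x = b + c

/-- A positive linear operator. -/
def IsPosMap (T : X →ₗ[ℝ] X) : Prop := ∀ x : X, 0 ≤ x → 0 ≤ T x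

/-- A band projection: a linear projection whose range is a projection band and whose
kernel is the disjoint complement of the range. -/
def IsBandProj (P : X →ₗ[ℝ] X) : Prop :=
  P ∘ₗ P = P ∧ IsProjBand (Set.range ⇑P) ∧ (LinearMap.ker P : Set X) = dComp (Set.range ⇑P)

/-- A pre-Riesz space: for every nonempty finite `A ⊆ X` and every `x`, if the upper bounds
of `x + A` are contained in the upper bounds of `A`, then `x ≥ 0`. -/
def IsPreRiesz (X : Type*) [AddCommGroup X] [PartialOrder X] [IsOrderedAddMonoid X] [Module ℝ X]
    [PosSMulStrictMono ℝ X] : Prop :=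
  ∀ (A : Set X) (x : X), A.Finite → A.Nonempty →
    upperBounds ((x + ·) '' A) ⊆ upperBounds A → 0 ≤ x

/-!
Band projections `P` of a pre-Riesz space satisfy `0 ≤ P ≤ I`: for `x ≥ 0` the two summands of
`x = P x + (x - P x)` are disjoint, and in a pre-Riesz space disjoint elements with a positive sum
are positive. With this, `P ≤ Q` gives `0 ≤ (I - Q)(Q - P) = QP - P` and `0 ≤ (I - Q)P = P - QP`,
so `QP = P` on the positive cone, hence everywhere because a pre-Riesz space is directed.
Conversely `QP = P` makes `Q - P = Q(I - P)` a product of positive operators.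
-/

set_option linter.unusedSectionVars false

theorem mem_upperBounds_pair {α : Type*} [Preorder α] {a b u : α} :
    u ∈ upperBounds ({a, b} : Set α) ↔ a ≤ u ∧ b ≤ u := by
  simp [upperBounds]

theorem UDisjoint.symm {x y : X} (h : UDisjoint x y) : UDisjoint y x := by
  unfold UDisjoint at *
  rwa [add_comm y x, show -y - x = -x - y by abel, Set.pair_comm (y - x)]

namespace IsPreRiesz

theorem exists_nonneg_ge (hX : IsPreRiesz X) (x : X) : ∃ u, 0 ≤ u ∧ x ≤ u := by
  by_contra! h
  have hx : 0 ≤ x := by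
    refine hX {0, x} x (Set.toFinite _) (Set.insert_nonempty _ _) fun u hu => ?_
    simp only [Set.image_pair, add_zero, mem_upperBounds_pair] at hu
    exact absurd (le_sub_iff_add_le.mpr hu.2) (h (u - x) (sub_nonneg.mpr hu.1))
  exact h x hx le_rfl

theorem linearMap_ext_of_nonneg (hX : IsPreRiesz X) {Y : Type*} [AddCommGroup Y] [Module ℝ Y]
    {S T : X →ₗ[ℝ] Y} (h : ∀ x, 0 ≤ x → S x = T x) : S = T := by
  ext x
  obtain ⟨u, hu, hxu⟩ := hX.exists_nonneg_ge x
  calc S x = S u - S (u - x) := by simp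
    _ = T u - T (u - x) := by rw [h u hu, h _ (sub_nonneg.mpr hxu)]
    _ = T x := by simp

theorem eq_of_isPosMap_sub_of_isPosMap_sub (hX : IsPreRiesz X) {S T : X →ₗ[ℝ] X}
    (hST : IsPosMap (S - T)) (hTS : IsPosMap (T - S)) : S = T :=
  hX.linearMap_ext_of_nonneg fun x hx =>
    le_antisymm (sub_nonneg.mp (hTS x hx)) (sub_nonneg.mp (hST x hx))

theorem nonneg_of_uDisjoint (hX : IsPreRiesz X) {b c : X} (h : UDisjoint b c)
    (hbc : 0 ≤ b + c) : 0 ≤ c := by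
  -- `2c + {b - c, -b - c} = {b + c, c - b}`, and since `-b - c ≤ b + c`, disjointness turns its
  -- upper bounds into upper bounds of `{b - c, -b - c}`.
  have h2c : 0 ≤ c + c := by
    refine hX {b - c, -b - c} (c + c) (Set.toFinite _) (Set.insert_nonempty _ _) fun u hu => ?_
    rw [Set.image_pair, show c + c + (b - c) = b + c by abel,
      show c + c + (-b - c) = c - b by abel, mem_upperBounds_pair] at hu
    have hneg : -b - c ≤ u :=
      calc -b - c = -(b + c) := by abel
        _ ≤ b + c := neg_le_self hbc
        _ ≤ u := hu.1
    have hu' : u ∈ upperBounds ({b + c, -b - c} : Set X) := mem_upperBounds_pair.mpr ⟨hu.1, hneg⟩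
    rw [h, mem_upperBounds_pair] at hu'
    exact mem_upperBounds_pair.mpr ⟨hu'.1, hneg⟩
  have := smul_nonneg (by norm_num : (0 : ℝ) ≤ 2⁻¹) h2c
  rwa [← two_smul ℝ, smul_smul, inv_mul_cancel₀ two_ne_zero, one_smul] at this

end IsPreRiesz

theorem IsPosMap.comp {S T : X →ₗ[ℝ] X} (hS : IsPosMap S) (hT : IsPosMap T) :
    IsPosMap (S ∘ₗ T) :=
  fun x hx => hS (T x) (hT x hx)

namespace IsBandProj

variable {P : X →ₗ[ℝ] X}

theorem apply_apply (hP : IsBandProj P) (x : X) : P (P x) = P x :=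
  LinearMap.congr_fun hP.1 x

theorem uDisjoint_sub_apply (hP : IsBandProj P) (x : X) : UDisjoint (x - P x) (P x) := by
  have hker : x - P x ∈ (LinearMap.ker P : Set X) := by
    simp [LinearMap.mem_ker, hP.apply_apply]
  rw [hP.2.2] at hker
  exact hker (P x) ⟨x, rfl⟩

theorem isPosMap (hX : IsPreRiesz X) (hP : IsBandProj P) : IsPosMap P := fun x hx =>
  hX.nonneg_of_uDisjoint (hP.uDisjoint_sub_apply x) (by rwa [sub_add_cancel])

theorem isPosMap_id_sub (hX : IsPreRiesz X) (hP : IsBandProj P) :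
    IsPosMap (LinearMap.id - P) := fun x hx =>
  show 0 ≤ x - P x from
    hX.nonneg_of_uDisjoint (hP.uDisjoint_sub_apply x).symm (by rwa [add_sub_cancel])

end IsBandProj

/-- Domination of band projections: `PX ⊆ QX` iff `QP = P` iff `P ≤ Q`. -/
theorem stmt_4 (hX : IsPreRiesz X) (P Q : X →ₗ[ℝ] X)
    (hP : IsBandProj P) (hQ : IsBandProj Q) :
    [Set.range ⇑P ⊆ Set.range ⇑Q,
     Q ∘ₗ P = P,
     IsPosMap (Q - P)].TFAE := by
  tfae_have 1 → 2 := fun h => LinearMap.ext fun x => by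
    obtain ⟨y, hy⟩ := h ⟨x, rfl⟩
    simp only [LinearMap.comp_apply, ← hy, hQ.apply_apply]
  tfae_have 2 → 1 := by
    rintro h _ ⟨x, rfl⟩
    exact ⟨P x, by rw [← LinearMap.comp_apply, h]⟩
  tfae_have 2 → 3 := fun h => by
    have hfactor : Q - P = Q ∘ₗ (LinearMap.id - P) := by
      rw [LinearMap.comp_sub, LinearMap.comp_id, h]
    rw [hfactor]
    exact (hQ.isPosMap hX).comp (hP.isPosMap_id_sub hX)
  tfae_have 3 → 2 := fun hPQ => by
    have hge : IsPosMap (Q ∘ₗ P - P) := by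
      have hfactor : (LinearMap.id - Q) ∘ₗ (Q - P) = Q ∘ₗ P - P := by
        rw [LinearMap.comp_sub, LinearMap.sub_comp, LinearMap.sub_comp, hQ.1]
        simp only [LinearMap.id_comp]
        abel
      exact hfactor ▸ (hQ.isPosMap_id_sub hX).comp hPQ
    have hle : IsPosMap (P - Q ∘ₗ P) := by
      have hfactor : (LinearMap.id - Q) ∘ₗ P = P - Q ∘ₗ P := by
        rw [LinearMap.sub_comp, LinearMap.id_comp]
      exact hfactor ▸ (hQ.isPosMap_id_sub hX).comp (hP.isPosMap hX)
    exact hX.eq_of_isPosMap_sub_of_isPosMap_sub hge hle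
  tfae_finish
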